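/- Let p ≥ 2 and ψ ∈ Ψ. If u > 0 and u+2 ≤ r ≤ p+u, then every timelike r-dimensional subspace π of (N, g_N) satisfies rank J_N(π) = p; hence rank J_N(·) is constant on timelike r-planes and, since J_N(π)² = 0, (N, g_N) is Jordan Osserman of type (r,0). Similarly, if v > 0 and v+2 ≤ s ≤ p+v, then every spacelike s-dimensional subspace π satisfies rank J_N(π) = p, and (N, g_N) is Jordan Osserman of type (0,s). -/

import Mathlib

open scoped BigOperators

/-- The partial derivative `∂ₖ f` at `x`. -/
noncomputable def pd {p : ℕ} (f : (Fin p → ℝ) → ℝ) (k : Fin p) (x : Fin p → ℝ) : ℝ :=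
  fderiv ℝ f x (Pi.single k 1)

/-- The second partial derivative `∂ₖ ∂ₗ f` at `x`. -/
noncomputable def pd2 {p : ℕ} (f : (Fin p → ℝ) → ℝ) (k l : Fin p) (x : Fin p → ℝ) : ℝ :=
  pd (pd f l) k x

/-- The curvature components
`R_ψ(i,j,k,l) := -(1/2)(ψ_{il/jk} + ψ_{jk/il} - ψ_{ik/jl} - ψ_{jl/ik})`,
where `ψ_{ab/cd} := ∂_c ∂_d ψ_{ab}`. -/
noncomputable def curv {p : ℕ} (ψ : (Fin p → ℝ) → Fin p → Fin p → ℝ)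
    (i j k l : Fin p) (x : Fin p → ℝ) : ℝ :=
  -(1/2) * (pd2 (fun y => ψ y i l) j k x + pd2 (fun y => ψ y j k) i l x
    - pd2 (fun y => ψ y i k) j l x - pd2 (fun y => ψ y j l) i k x)

/-- The Jacobi bilinear form `𝒥_ψ(x;X)(Y,Z) := Σ R_ψ(i,j,k,l)(x) Yᵢ Xⱼ Xₖ Zₗ`. -/
noncomputable def jacobiForm {p : ℕ} (ψ : (Fin p → ℝ) → Fin p → Fin p → ℝ)
    (x X Y Z : Fin p → ℝ) : ℝ :=
  ∑ i, ∑ j, ∑ k, ∑ l, curv ψ i j k l x * Y i * X j * X k * Z l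

/-- `ψ` is a smooth symmetric 2-tensor field on `ℝ^p`. -/
def IsSmoothSym {p : ℕ} (ψ : (Fin p → ℝ) → Fin p → Fin p → ℝ) : Prop :=
  (∀ i j, ContDiff ℝ (⊤ : ℕ∞) fun x => ψ x i j) ∧ ∀ x i j, ψ x i j = ψ x j i

/-- Membership in the class `Ψ`: `ψ` is a smooth symmetric 2-tensor field such that for every
`x` and every `X ≠ 0` the Jacobi form `𝒥_ψ(x;X)` is positive semidefinite with null space
exactly the line `ℝ·X` (i.e. positive semidefinite of rank `p-1`). -/
def MemPsi {p : ℕ} (ψ : (Fin p → ℝ) → Fin p → Fin p → ℝ) : Prop :=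
  IsSmoothSym ψ ∧ ∀ (x X : Fin p → ℝ), X ≠ 0 →
    (∀ Y, 0 ≤ jacobiForm ψ x X Y Y) ∧
    ∀ Y, (∀ Z, jacobiForm ψ x X Y Z = 0) ↔ ∃ c : ℝ, Y = c • X

/-- The model space `ℝ^{2p} = ℝ^p × ℝ^p`; `Sum.inl` indexes the `x`-coordinates and
`Sum.inr` the `y`-coordinates. -/
abbrev VV (p : ℕ) := Fin p ⊕ Fin p → ℝ

/-- The neutral signature `(p,p)` metric `g_ψ` at the point with `x`-coordinate `x`:
`g(∂ᵢˣ,∂ⱼʸ) = δᵢⱼ`, `g(∂ᵢʸ,∂ⱼʸ) = 0`, `g(∂ᵢˣ,∂ⱼˣ) = ψᵢⱼ(x)`. -/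
noncomputable def gpsi {p : ℕ} (ψ : (Fin p → ℝ) → Fin p → Fin p → ℝ)
    (x : Fin p → ℝ) (Z W : VV p) : ℝ :=
  (∑ i, Z (Sum.inl i) * W (Sum.inr i)) + (∑ i, Z (Sum.inr i) * W (Sum.inl i))
    + ∑ i, ∑ j, ψ x i j * Z (Sum.inl i) * W (Sum.inl j)

/-- The Jacobi operator `J(x;Z)` of `(ℝ^{2p}, g_ψ)` as a matrix: its image lies in
`𝒴 = span{∂ᵢʸ}` and its `y`-components are
`(J(x;Z)W)_l = Σ_{i,j,k} R_ψ(i,j,k,l)(x) (ρW)ᵢ (ρZ)ⱼ (ρZ)ₖ`. -/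
noncomputable def jacobiMat {p : ℕ} (ψ : (Fin p → ℝ) → Fin p → Fin p → ℝ)
    (x : Fin p → ℝ) (Z : VV p) : Matrix (Fin p ⊕ Fin p) (Fin p ⊕ Fin p) ℝ :=
  Matrix.of fun a b =>
    match a, b with
    | Sum.inr l, Sum.inl i => ∑ j, ∑ k, curv ψ i j k l x * Z (Sum.inl j) * Z (Sum.inl k)
    | _, _ => 0

/-- `π` is a nondegenerate subspace of signature `(r,s)` for the symmetric bilinear form `g`:
`g` restricted to `π` is nondegenerate, the maximal dimension of a negative definite subspace
of `π` is `r`, and the maximal dimension of a positive definite subspace of `π` is `s`. -/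
def HasSignature {V : Type*} [AddCommGroup V] [Module ℝ V] (g : V → V → ℝ)
    (π : Submodule ℝ V) (r s : ℕ) : Prop :=
  (∀ z ∈ π, (∀ w ∈ π, g z w = 0) → z = 0) ∧
  (∃ W : Submodule ℝ V, W ≤ π ∧ Module.finrank ℝ W = r ∧ ∀ z ∈ W, z ≠ 0 → g z z < 0) ∧
  (∀ W : Submodule ℝ V, W ≤ π → (∀ z ∈ W, z ≠ 0 → g z z < 0) → Module.finrank ℝ W ≤ r) ∧
  (∃ W : Submodule ℝ V, W ≤ π ∧ Module.finrank ℝ W = s ∧ ∀ z ∈ W, z ≠ 0 → 0 < g z z) ∧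
  (∀ W : Submodule ℝ V, W ≤ π → (∀ z ∈ W, z ≠ 0 → 0 < g z z) → Module.finrank ℝ W ≤ s)

/-- `e` is a `g`-orthonormal basis of `π` with signs `ε i = g(e i, e i) = ±1`. -/
def IsOrthoBasis {V : Type*} [AddCommGroup V] [Module ℝ V] (g : V → V → ℝ)
    (π : Submodule ℝ V) {n : ℕ} (e : Fin n → V) (ε : Fin n → ℝ) : Prop :=
  Submodule.span ℝ (Set.range e) = π ∧ (∀ i, ε i = 1 ∨ ε i = -1) ∧
    ∀ i j, g (e i) (e j) = if i = j then ε i else 0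

/-- The higher order Jacobi operator `J(π) := Σᵢ εᵢ J(x; eᵢ)` determined by a
`g_ψ`-orthonormal basis `e` with signs `ε` of a nondegenerate subspace. -/
noncomputable def hoJ {p : ℕ} (ψ : (Fin p → ℝ) → Fin p → Fin p → ℝ) (x : Fin p → ℝ)
    {n : ℕ} (e : Fin n → VV p) (ε : Fin n → ℝ) :
    Matrix (Fin p ⊕ Fin p) (Fin p ⊕ Fin p) ℝ :=
  ∑ i, ε i • jacobiMat ψ x (e i)

/-- Two square matrices are similar (conjugate), i.e. they have the same Jordan normal form. -/
def MatSimilar {ι : Type*} [Fintype ι] [DecidableEq ι] (A B : Matrix ι ι ℝ) : Prop :=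
  ∃ P : Matrix ι ι ℝ, IsUnit P.det ∧ A = P * B * P⁻¹

/-- The model space of the product `N = ℝ^{2p} × ℝ^{(u,v)}`. -/
abbrev VN (p u v : ℕ) := (Fin p ⊕ Fin p) ⊕ Fin (u + v) → ℝ

/-- The product metric `g_N = g_ψ ⊕ ⟨·,·⟩_{(u,v)}` of signature `(p+u, p+v)`,
where the flat factor has `u` negative and `v` positive directions. -/
noncomputable def gN {p : ℕ} (u v : ℕ) (ψ : (Fin p → ℝ) → Fin p → Fin p → ℝ)
    (x : Fin p → ℝ) (Z W : VN p u v) : ℝ :=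
  gpsi ψ x (fun a => Z (Sum.inl a)) (fun a => W (Sum.inl a))
    + ∑ i : Fin (u + v), (if (i : ℕ) < u then (-1 : ℝ) else 1) * Z (Sum.inr i) * W (Sum.inr i)

/-- The Jacobi operator of the product metric `g_N`: `J_N(x;Z)W = (J(x;Z_M)W_M, 0)`. -/
noncomputable def jacobiMatN {p : ℕ} (u v : ℕ) (ψ : (Fin p → ℝ) → Fin p → Fin p → ℝ)
    (x : Fin p → ℝ) (Z : VN p u v) :
    Matrix ((Fin p ⊕ Fin p) ⊕ Fin (u + v)) ((Fin p ⊕ Fin p) ⊕ Fin (u + v)) ℝ :=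
  Matrix.of fun a b =>
    match a, b with
    | Sum.inl a', Sum.inl b' => jacobiMat ψ x (fun c => Z (Sum.inl c)) a' b'
    | _, _ => 0

/-- The higher order Jacobi operator `J_N(π) := Σᵢ εᵢ J_N(x; eᵢ)` of `(N, g_N)`. -/
noncomputable def hoJN {p : ℕ} (u v : ℕ) (ψ : (Fin p → ℝ) → Fin p → Fin p → ℝ)
    (x : Fin p → ℝ) {n : ℕ} (e : Fin n → VN p u v) (ε : Fin n → ℝ) :
    Matrix ((Fin p ⊕ Fin p) ⊕ Fin (u + v)) ((Fin p ⊕ Fin p) ⊕ Fin (u + v)) ℝ :=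
  ∑ i, ε i • jacobiMatN u v ψ x (e i)

section Stmt15Aux

/-! ### Symmetry of second partial derivatives and of the curvature tensor -/

lemma pd2_comm {p : ℕ} {f : (Fin p → ℝ) → ℝ} (hf : ContDiff ℝ (⊤ : ℕ∞) f) (k l : Fin p)
    (x : Fin p → ℝ) : pd2 f k l x = pd2 f l k x := by
  have hsymm : IsSymmSndFDerivAt ℝ f x := hf.contDiffAt.isSymmSndFDerivAt (by rw [minSmoothness_of_isRCLikeNormedField]; exact WithTop.coe_le_coe.mpr le_top)
  have hc : DifferentiableAt ℝ (fderiv ℝ f) x :=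
    ((hf.fderiv_right (m := 1) (WithTop.coe_le_coe.mpr le_top)).differentiable one_ne_zero).differentiableAt
  have key : ∀ w : Fin p → ℝ, fderiv ℝ (fun y => fderiv ℝ f y w) x =
      (fderiv ℝ (fderiv ℝ f) x).flip w := by
    intro w
    have h := fderiv_clm_apply (c := fderiv ℝ f) (u := fun _ => w) hc (differentiableAt_const w)
    simpa using h
  have e1 : pd2 f k l x = fderiv ℝ (fderiv ℝ f) x (Pi.single k 1) (Pi.single l 1) := by
    show fderiv ℝ (fun y => fderiv ℝ f y (Pi.single l 1)) x (Pi.single k 1) = _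
    rw [key]; rfl
  have e2 : pd2 f l k x = fderiv ℝ (fderiv ℝ f) x (Pi.single l 1) (Pi.single k 1) := by
    show fderiv ℝ (fun y => fderiv ℝ f y (Pi.single k 1)) x (Pi.single l 1) = _
    rw [key]; rfl
  rw [e1, e2]
  exact hsymm _ _

lemma curv_symm {p : ℕ} {ψ : (Fin p → ℝ) → Fin p → Fin p → ℝ} (hψ : IsSmoothSym ψ)
    (i j k l : Fin p) (x : Fin p → ℝ) : curv ψ i j k l x = curv ψ l k j i x := by
  have hfun : ∀ a b : Fin p, (fun y => ψ y a b) = fun y => ψ y b a :=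
    fun a b => funext fun y => hψ.2 y a b
  unfold curv
  rw [hfun l i, hfun k j, hfun l j, hfun k i,
    pd2_comm (hψ.1 i l) k j, pd2_comm (hψ.1 j k) l i,
    pd2_comm (hψ.1 j l) k i, pd2_comm (hψ.1 i k) l j]
  ring

lemma sum4_rev {p : ℕ} (F : Fin p → Fin p → Fin p → Fin p → ℝ) :
    ∑ i, ∑ j, ∑ k, ∑ l, F i j k l = ∑ i, ∑ j, ∑ k, ∑ l, F l k j i := by
  calc ∑ i, ∑ j, ∑ k, ∑ l, F i j k l
      = ∑ q : Fin p × Fin p × Fin p × Fin p, F q.1 q.2.1 q.2.2.1 q.2.2.2 := by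
        rw [Fintype.sum_prod_type]
        refine Finset.sum_congr rfl fun i _ => ?_
        rw [Fintype.sum_prod_type]
        refine Finset.sum_congr rfl fun j _ => ?_
        rw [Fintype.sum_prod_type]
    _ = ∑ q : Fin p × Fin p × Fin p × Fin p, F q.2.2.2 q.2.2.1 q.2.1 q.1 :=
        Fintype.sum_bijective (fun q => (q.2.2.2, q.2.2.1, q.2.1, q.1))
          (Function.Involutive.bijective (fun ⟨_, _, _, _⟩ => rfl)) _ _
          (fun ⟨_, _, _, _⟩ => rfl)
    _ = ∑ i, ∑ j, ∑ k, ∑ l, F l k j i := by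
        rw [Fintype.sum_prod_type]
        refine Finset.sum_congr rfl fun i _ => ?_
        rw [Fintype.sum_prod_type]
        refine Finset.sum_congr rfl fun j _ => ?_
        rw [Fintype.sum_prod_type]

lemma sum4_congr {p : ℕ} {F G : Fin p → Fin p → Fin p → Fin p → ℝ}
    (h : ∀ i j k l, F i j k l = G i j k l) :
    ∑ i, ∑ j, ∑ k, ∑ l, F i j k l = ∑ i, ∑ j, ∑ k, ∑ l, G i j k l :=
  Finset.sum_congr rfl fun i _ => Finset.sum_congr rfl fun j _ =>
    Finset.sum_congr rfl fun k _ => Finset.sum_congr rfl fun l _ => h i j k l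

/-! ### The Jacobi form: symmetry, bilinearity, Cauchy–Schwarz -/

lemma jacobiForm_symm {p : ℕ} {ψ : (Fin p → ℝ) → Fin p → Fin p → ℝ} (hψ : IsSmoothSym ψ)
    (x X Y Z : Fin p → ℝ) : jacobiForm ψ x X Y Z = jacobiForm ψ x X Z Y := by
  unfold jacobiForm
  rw [sum4_rev]
  exact sum4_congr fun i j k l => by rw [curv_symm hψ l k j i]; ring

lemma jacobiForm_add_right {p : ℕ} (ψ : (Fin p → ℝ) → Fin p → Fin p → ℝ)
    (x X Y Z W : Fin p → ℝ) :
    jacobiForm ψ x X Y (Z + W) = jacobiForm ψ x X Y Z + jacobiForm ψ x X Y W := by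
  unfold jacobiForm
  simp only [Pi.add_apply, mul_add, Finset.sum_add_distrib]

lemma jacobiForm_smul_right {p : ℕ} (ψ : (Fin p → ℝ) → Fin p → Fin p → ℝ)
    (x X Y Z : Fin p → ℝ) (t : ℝ) :
    jacobiForm ψ x X Y (t • Z) = t * jacobiForm ψ x X Y Z := by
  unfold jacobiForm
  simp only [Pi.smul_apply, smul_eq_mul, Finset.mul_sum]
  exact sum4_congr fun i j k l => by ring

lemma jacobiForm_add_left {p : ℕ} (ψ : (Fin p → ℝ) → Fin p → Fin p → ℝ)
    (x X Y Z W : Fin p → ℝ) :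
    jacobiForm ψ x X (Y + Z) W = jacobiForm ψ x X Y W + jacobiForm ψ x X Z W := by
  unfold jacobiForm
  simp only [Pi.add_apply, add_mul, mul_add, Finset.sum_add_distrib]

lemma jacobiForm_smul_left {p : ℕ} (ψ : (Fin p → ℝ) → Fin p → Fin p → ℝ)
    (x X Y Z : Fin p → ℝ) (t : ℝ) :
    jacobiForm ψ x X (t • Y) Z = t * jacobiForm ψ x X Y Z := by
  unfold jacobiForm
  simp only [Pi.smul_apply, smul_eq_mul, Finset.mul_sum]
  exact sum4_congr fun i j k l => by ring

lemma jacobiForm_zero_X {p : ℕ} (ψ : (Fin p → ℝ) → Fin p → Fin p → ℝ)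
    (x Y Z : Fin p → ℝ) : jacobiForm ψ x 0 Y Z = 0 := by
  unfold jacobiForm
  simp

lemma jacobi_null {p : ℕ} {ψ : (Fin p → ℝ) → Fin p → Fin p → ℝ} (hψ : MemPsi ψ)
    {x X : Fin p → ℝ} (hX : X ≠ 0) {Y : Fin p → ℝ}
    (h0 : jacobiForm ψ x X Y Y = 0) (Z : Fin p → ℝ) : jacobiForm ψ x X Y Z = 0 := by
  set a := jacobiForm ψ x X Y Z with ha
  have hb : 0 ≤ jacobiForm ψ x X Z Z := (hψ.2 x X hX).1 Z
  set b := jacobiForm ψ x X Z Z with hbdef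
  have key : ∀ t : ℝ, 0 ≤ 2 * t * a + t ^ 2 * b := by
    intro t
    have h := (hψ.2 x X hX).1 (Y + t • Z)
    rw [jacobiForm_add_left, jacobiForm_add_right, jacobiForm_add_right,
      jacobiForm_smul_left, jacobiForm_smul_right, jacobiForm_smul_right,
      jacobiForm_smul_left] at h
    rw [jacobiForm_symm hψ.1 x X Z Y] at h
    rw [h0, ← ha, ← hbdef] at h
    nlinarith [h]
  rcases eq_or_lt_of_le hb with hb0 | hbpos
  · have h1 := key 1
    have h2 := key (-1)
    rw [← hb0] at h1 h2
    nlinarith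
  · have h := key (-a / b)
    have h' : 2 * (-a / b) * a + (-a / b) ^ 2 * b = -(a ^ 2) / b := by
      field_simp
      ring
    rw [h'] at h
    have ha2 : a ^ 2 ≤ 0 := by
      by_contra hc
      push_neg at hc
      have : -(a ^ 2) / b < 0 := div_neg_of_neg_of_pos (by linarith) hbpos
      linarith
    have : a ^ 2 = 0 := le_antisymm ha2 (sq_nonneg a)
    exact pow_eq_zero_iff two_ne_zero |>.mp this

/-! ### The metric `gN` as a single sum of monomials; bilinearity -/

/-- Index type for writing `gN` as a single sum of monomials. -/
abbrev Gidx (p u v : ℕ) := (Fin p ⊕ Fin p) ⊕ ((Fin p × Fin p) ⊕ Fin (u + v))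

noncomputable def gco {p : ℕ} (u : ℕ) (v : ℕ) (ψ : (Fin p → ℝ) → Fin p → Fin p → ℝ)
    (x : Fin p → ℝ) : Gidx p u v → ℝ
  | Sum.inl _ => 1
  | Sum.inr (Sum.inl q) => ψ x q.1 q.2
  | Sum.inr (Sum.inr i) => if (i : ℕ) < u then (-1 : ℝ) else 1

def ga {p u v : ℕ} : Gidx p u v → (Fin p ⊕ Fin p) ⊕ Fin (u + v)
  | Sum.inl (Sum.inl i) => Sum.inl (Sum.inl i)
  | Sum.inl (Sum.inr i) => Sum.inl (Sum.inr i)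
  | Sum.inr (Sum.inl q) => Sum.inl (Sum.inl q.1)
  | Sum.inr (Sum.inr i) => Sum.inr i

def gb {p u v : ℕ} : Gidx p u v → (Fin p ⊕ Fin p) ⊕ Fin (u + v)
  | Sum.inl (Sum.inl i) => Sum.inl (Sum.inr i)
  | Sum.inl (Sum.inr i) => Sum.inl (Sum.inl i)
  | Sum.inr (Sum.inl q) => Sum.inl (Sum.inl q.2)
  | Sum.inr (Sum.inr i) => Sum.inr i

lemma gN_eq_sum {p u v : ℕ} (ψ : (Fin p → ℝ) → Fin p → Fin p → ℝ) (x : Fin p → ℝ)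
    (Z W : VN p u v) :
    gN u v ψ x Z W = ∑ q : Gidx p u v, gco u v ψ x q * Z (ga q) * W (gb q) := by
  rw [Fintype.sum_sum_type, Fintype.sum_sum_type, Fintype.sum_sum_type, Fintype.sum_prod_type]
  unfold gN gpsi
  simp only [gco, ga, gb, one_mul]
  ring

lemma gN_sum_smul {p u v r : ℕ} (ψ : (Fin p → ℝ) → Fin p → Fin p → ℝ) (x : Fin p → ℝ)
    (e : Fin r → VN p u v) (a : Fin r → ℝ) :
    gN u v ψ x (∑ n, a n • e n) (∑ n, a n • e n)
      = ∑ m, ∑ n, a m * a n * gN u v ψ x (e m) (e n) := by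
  calc gN u v ψ x (∑ n, a n • e n) (∑ n, a n • e n)
      = ∑ q : Gidx p u v, ∑ m, ∑ n,
          gco u v ψ x q * (a m * e m (ga q)) * (a n * e n (gb q)) := by
        rw [gN_eq_sum]
        refine Finset.sum_congr rfl fun q _ => ?_
        simp only [Finset.sum_apply, Pi.smul_apply, smul_eq_mul, Finset.mul_sum,
          Finset.sum_mul]
        exact Finset.sum_comm
    _ = ∑ m, ∑ n, ∑ q : Gidx p u v,
          gco u v ψ x q * (a m * e m (ga q)) * (a n * e n (gb q)) := by
        rw [Finset.sum_comm]
        exact Finset.sum_congr rfl fun m _ => Finset.sum_comm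
    _ = ∑ m, ∑ n, a m * a n * gN u v ψ x (e m) (e n) := by
        refine Finset.sum_congr rfl fun m _ => Finset.sum_congr rfl fun n _ => ?_
        rw [gN_eq_sum, Finset.mul_sum]
        exact Finset.sum_congr rfl fun q _ => by ring

lemma gN_smul_same {p u v : ℕ} (ψ : (Fin p → ℝ) → Fin p → Fin p → ℝ) (x : Fin p → ℝ)
    (t : ℝ) (Z : VN p u v) :
    gN u v ψ x (t • Z) (t • Z) = t ^ 2 * gN u v ψ x Z Z := by
  rw [gN_eq_sum, gN_eq_sum, Finset.mul_sum]
  exact Finset.sum_congr rfl fun q _ => by simp only [Pi.smul_apply, smul_eq_mul]; ring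

lemma gN_zero {p u v : ℕ} (ψ : (Fin p → ℝ) → Fin p → Fin p → ℝ) (x : Fin p → ℝ) :
    gN u v ψ x 0 0 = 0 := by
  rw [gN_eq_sum]
  simp

/-! ### Signs of an orthonormal basis of a definite subspace -/

lemma sq_pos_ne {t : ℝ} (ht : t ≠ 0) : 0 < t ^ 2 :=
  lt_of_le_of_ne (sq_nonneg t) (Ne.symm (pow_ne_zero 2 ht))

lemma sign_of_timelike {p u v r : ℕ} (ψ : (Fin p → ℝ) → Fin p → Fin p → ℝ) (x : Fin p → ℝ)
    (π : Submodule ℝ (VN p u v)) (e : Fin r → VN p u v) (ε : Fin r → ℝ)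
    (hsig : HasSignature (gN u v ψ x) π r 0) (horth : IsOrthoBasis (gN u v ψ x) π e ε) :
    ∀ n, ε n = -1 := by
  intro n
  rcases horth.2.1 n with h1 | h
  · exfalso
    have hmem : e n ∈ π := by
      rw [← horth.1]; exact Submodule.subset_span ⟨n, rfl⟩
    have hg : gN u v ψ x (e n) (e n) = 1 := by rw [horth.2.2 n n]; simp [h1]
    have hne : e n ≠ 0 := by
      intro h0
      rw [h0, gN_zero] at hg
      norm_num at hg
    have hpos : ∀ z ∈ Submodule.span ℝ ({e n} : Set (VN p u v)), z ≠ 0 →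
        0 < gN u v ψ x z z := by
      intro z hz hz0
      obtain ⟨t, rfl⟩ := Submodule.mem_span_singleton.mp hz
      have ht : t ≠ 0 := fun h => hz0 (by simp [h])
      rw [gN_smul_same, hg, mul_one]
      exact sq_pos_ne ht
    have hle := hsig.2.2.2.2 (Submodule.span ℝ {e n})
      (by rwa [Submodule.span_le, Set.singleton_subset_iff]) hpos
    rw [finrank_span_singleton hne] at hle
    omega
  · exact h

lemma sign_of_spacelike {p u v s : ℕ} (ψ : (Fin p → ℝ) → Fin p → Fin p → ℝ) (x : Fin p → ℝ)
    (π : Submodule ℝ (VN p u v)) (e : Fin s → VN p u v) (ε : Fin s → ℝ)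
    (hsig : HasSignature (gN u v ψ x) π 0 s) (horth : IsOrthoBasis (gN u v ψ x) π e ε) :
    ∀ n, ε n = 1 := by
  intro n
  rcases horth.2.1 n with h1 | h
  · exact h1
  · exfalso
    have hmem : e n ∈ π := by
      rw [← horth.1]; exact Submodule.subset_span ⟨n, rfl⟩
    have hg : gN u v ψ x (e n) (e n) = -1 := by rw [horth.2.2 n n]; simp [h]
    have hne : e n ≠ 0 := by
      intro h0
      rw [h0, gN_zero] at hg
      norm_num at hg
    have hneg : ∀ z ∈ Submodule.span ℝ ({e n} : Set (VN p u v)), z ≠ 0 →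
        gN u v ψ x z z < 0 := by
      intro z hz hz0
      obtain ⟨t, rfl⟩ := Submodule.mem_span_singleton.mp hz
      have ht : t ≠ 0 := fun h => hz0 (by simp [h])
      rw [gN_smul_same, hg]
      nlinarith [sq_pos_ne ht]
    have hle := hsig.2.2.1 (Submodule.span ℝ {e n})
      (by rwa [Submodule.span_le, Set.singleton_subset_iff]) hneg
    rw [finrank_span_singleton hne] at hle
    omega

/-! ### The key geometric lemma: projections of a definite basis do not lie on a line -/

lemma noline {p u v r : ℕ} (ψ : (Fin p → ℝ) → Fin p → Fin p → ℝ) (x : Fin p → ℝ)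
    (π : Submodule ℝ (VN p u v)) (e : Fin r → VN p u v) (ε : Fin r → ℝ)
    (horth : IsOrthoBasis (gN u v ψ x) π e ε) (σ : ℝ) (hσ2 : σ ^ 2 = 1)
    (hε : ∀ n, ε n = σ) {k : ℕ} (ι : Fin k → Fin (u + v))
    (hι : ∀ i : Fin (u + v), (∀ j, ι j ≠ i) → (if (i : ℕ) < u then (-1 : ℝ) else 1) = -σ)
    (hkr : k + 2 ≤ r) :
    ¬ ∃ D : Fin p → ℝ, ∀ n, ∃ c : ℝ, (fun i => e n (Sum.inl (Sum.inl i))) = c • D := by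
  rintro ⟨D, hD⟩
  choose c hc using hD
  set L : (Fin r → ℝ) →ₗ[ℝ] ℝ × (Fin k → ℝ) :=
    { toFun := fun a => (∑ n, a n * c n, fun j => ∑ n, a n * e n (Sum.inr (ι j)))
      map_add' := by
        intro a b
        refine Prod.ext ?_ (funext fun j => ?_) <;>
          simp [add_mul, Finset.sum_add_distrib]
      map_smul' := by
        intro t a
        refine Prod.ext ?_ (funext fun j => ?_) <;>
          simp [smul_eq_mul, mul_assoc, Finset.mul_sum] } with hL
  obtain ⟨a, ha, hLa⟩ : ∃ a : Fin r → ℝ, a ≠ 0 ∧ L a = 0 := by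
    by_contra h
    push_neg at h
    have hker : LinearMap.ker L = ⊥ := by
      rw [eq_bot_iff]
      intro a haL
      rw [LinearMap.mem_ker] at haL
      by_contra ha0
      exact h a (by simpa using ha0) haL
    have hinj : Function.Injective L := LinearMap.ker_eq_bot.mp hker
    have hle := LinearMap.finrank_le_finrank_of_injective hinj
    rw [Module.finrank_fin_fun, Module.finrank_prod, Module.finrank_self,
      Module.finrank_fin_fun] at hle
    omega
  set w : VN p u v := ∑ n, a n • e n with hw
  have hLa1 : (∑ n, a n * c n) = 0 := congrArg Prod.fst hLa
  have hLa2 : ∀ j, (∑ n, a n * e n (Sum.inr (ι j))) = 0 := fun j =>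
    congrFun (congrArg Prod.snd hLa) j
  have hwx : ∀ i, w (Sum.inl (Sum.inl i)) = 0 := by
    intro i
    have h1 : w (Sum.inl (Sum.inl i)) = ∑ n, a n * (c n * D i) := by
      rw [hw, Finset.sum_apply]
      refine Finset.sum_congr rfl fun n _ => ?_
      have h2 := congrFun (hc n) i
      simp only [Pi.smul_apply, smul_eq_mul] at h2
      simp [h2]
    rw [h1]
    have h3 : ∑ n, a n * (c n * D i) = (∑ n, a n * c n) * D i := by
      rw [Finset.sum_mul]
      exact Finset.sum_congr rfl fun n _ => by ring
    rw [h3, hLa1, zero_mul]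
  have hwf : ∀ j, w (Sum.inr (ι j)) = 0 := by
    intro j
    rw [hw, Finset.sum_apply]
    simpa using hLa2 j
  have h1 : gN u v ψ x w w = σ * ∑ n, a n * a n := by
    rw [hw, gN_sum_smul]
    have hrow : ∀ m : Fin r, ∑ n, a m * a n * gN u v ψ x (e m) (e n) = a m * a m * σ := by
      intro m
      rw [Finset.sum_eq_single m]
      · rw [horth.2.2 m m, if_pos rfl, hε m]
      · intro n _ hn
        rw [horth.2.2 m n, if_neg (Ne.symm hn), mul_zero]
      · intro hm
        exact absurd (Finset.mem_univ m) hm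
    rw [Finset.sum_congr rfl fun m _ => hrow m, Finset.mul_sum]
    exact Finset.sum_congr rfl fun m _ => by ring
  have h2 : σ * gN u v ψ x w w ≤ 0 := by
    have hval : gN u v ψ x w w
        = ∑ i : Fin (u + v), (if (i : ℕ) < u then (-1 : ℝ) else 1)
            * w (Sum.inr i) * w (Sum.inr i) := by
      unfold gN gpsi
      simp [hwx]
    rw [hval, Finset.mul_sum]
    refine Finset.sum_nonpos fun i _ => ?_
    by_cases hi : ∃ j, ι j = i
    · obtain ⟨j, rfl⟩ := hi
      rw [hwf j]
      simp
    · push_neg at hi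
      rw [hι i hi]
      nlinarith [sq_nonneg (w (Sum.inr i)), hσ2, sq_nonneg σ]
  have hpos : 0 < ∑ n, a n * a n := by
    have hex : ∃ n, a n ≠ 0 := by
      by_contra h
      push_neg at h
      exact ha (funext h)
    obtain ⟨n0, hn0⟩ := hex
    refine Finset.sum_pos' (fun n _ => mul_self_nonneg _) ⟨n0, Finset.mem_univ n0, ?_⟩
    exact mul_self_pos.mpr hn0
  rw [h1] at h2
  nlinarith

/-! ### The core `p × p` block of the higher order Jacobi operator -/

noncomputable def Bmat {p u v : ℕ} (ψ : (Fin p → ℝ) → Fin p → Fin p → ℝ) (x : Fin p → ℝ)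
    {r : ℕ} (e : Fin r → VN p u v) (ε : Fin r → ℝ) : Matrix (Fin p) (Fin p) ℝ :=
  Matrix.of fun l i => ∑ n, ε n *
    ∑ j, ∑ k, curv ψ i j k l x * e n (Sum.inl (Sum.inl j)) * e n (Sum.inl (Sum.inl k))

lemma hoJN_eq {p u v r : ℕ} (ψ : (Fin p → ℝ) → Fin p → Fin p → ℝ) (x : Fin p → ℝ)
    (e : Fin r → VN p u v) (ε : Fin r → ℝ) :
    hoJN u v ψ x e ε
      = Matrix.fromBlocks (Matrix.fromBlocks 0 0 (Bmat ψ x e ε) 0) 0 0 0 := by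
  ext a b
  have happ : hoJN u v ψ x e ε a b = ∑ n, ε n * jacobiMatN u v ψ x (e n) a b := by
    unfold hoJN
    rw [Matrix.sum_apply]
    exact Finset.sum_congr rfl fun n _ => rfl
  rcases a with (a | a) | a <;> rcases b with (b | b) | b <;>
    simp only [happ, jacobiMatN, jacobiMat, Matrix.of_apply, Matrix.fromBlocks_apply₁₁,
      Matrix.fromBlocks_apply₁₂, Matrix.fromBlocks_apply₂₁, Matrix.fromBlocks_apply₂₂,
      Matrix.zero_apply, Bmat, mul_zero, Finset.sum_const_zero]

lemma sum4_cycle {p : ℕ} (f : Fin p → Fin p → Fin p → Fin p → ℝ) :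
    ∑ l, ∑ i, ∑ j, ∑ k, f i j k l = ∑ i, ∑ j, ∑ k, ∑ l, f i j k l := by
  rw [Finset.sum_comm]
  refine Finset.sum_congr rfl fun i _ => ?_
  rw [Finset.sum_comm]
  refine Finset.sum_congr rfl fun j _ => ?_
  rw [Finset.sum_comm]

lemma dot_Bmat {p u v r : ℕ} (ψ : (Fin p → ℝ) → Fin p → Fin p → ℝ) (x : Fin p → ℝ)
    (e : Fin r → VN p u v) (ε : Fin r → ℝ) (Y Z : Fin p → ℝ) :
    ∑ l, Z l * (Bmat ψ x e ε).mulVec Y l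
      = ∑ n, ε n * jacobiForm ψ x (fun i => e n (Sum.inl (Sum.inl i))) Y Z := by
  calc ∑ l, Z l * (Bmat ψ x e ε).mulVec Y l
      = ∑ l, ∑ i, ∑ n, ∑ j, ∑ k, ε n * curv ψ i j k l x * Y i
          * e n (Sum.inl (Sum.inl j)) * e n (Sum.inl (Sum.inl k)) * Z l := by
        simp only [Matrix.mulVec, dotProduct, Bmat, Matrix.of_apply,
          Finset.sum_mul, Finset.mul_sum]
        refine Finset.sum_congr rfl fun l _ => Finset.sum_congr rfl fun i _ =>
          Finset.sum_congr rfl fun n _ => Finset.sum_congr rfl fun j _ =>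
          Finset.sum_congr rfl fun k _ => by ring
    _ = ∑ n, ∑ l, ∑ i, ∑ j, ∑ k, ε n * curv ψ i j k l x * Y i
          * e n (Sum.inl (Sum.inl j)) * e n (Sum.inl (Sum.inl k)) * Z l := by
        rw [show (∑ l, ∑ i, ∑ n, ∑ j, ∑ k, ε n * curv ψ i j k l x * Y i
            * e n (Sum.inl (Sum.inl j)) * e n (Sum.inl (Sum.inl k)) * Z l)
            = ∑ l, ∑ n, ∑ i, ∑ j, ∑ k, ε n * curv ψ i j k l x * Y i
            * e n (Sum.inl (Sum.inl j)) * e n (Sum.inl (Sum.inl k)) * Z l from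
          Finset.sum_congr rfl fun l _ => Finset.sum_comm]
        exact Finset.sum_comm
    _ = ∑ n, ε n * jacobiForm ψ x (fun i => e n (Sum.inl (Sum.inl i))) Y Z := by
        refine Finset.sum_congr rfl fun n _ => ?_
        unfold jacobiForm
        simp only [Finset.mul_sum]
        rw [sum4_cycle (fun i j k l => ε n * curv ψ i j k l x * Y i
          * e n (Sum.inl (Sum.inl j)) * e n (Sum.inl (Sum.inl k)) * Z l)]
        exact sum4_congr fun i j k l => by ring

lemma isUnit_of_ker {p : ℕ} (B : Matrix (Fin p) (Fin p) ℝ)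
    (h : ∀ Y, B.mulVec Y = 0 → Y = 0) : IsUnit B.det := by
  rw [isUnit_iff_ne_zero]
  intro hdet
  obtain ⟨Y, hY0, hY⟩ := (Matrix.exists_mulVec_eq_zero_iff).mpr hdet
  exact hY0 (h Y hY)

lemma sq_zero_blocks {p u v : ℕ} (B B' : Matrix (Fin p) (Fin p) ℝ) :
    (Matrix.fromBlocks (Matrix.fromBlocks (0 : Matrix (Fin p) (Fin p) ℝ)
        (0 : Matrix (Fin p) (Fin p) ℝ) B 0) 0 0
        (0 : Matrix (Fin (u + v)) (Fin (u + v)) ℝ))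
      * (Matrix.fromBlocks (Matrix.fromBlocks (0 : Matrix (Fin p) (Fin p) ℝ)
        (0 : Matrix (Fin p) (Fin p) ℝ) B' 0) 0 0 0) = 0 := by
  rw [Matrix.fromBlocks_multiply, Matrix.fromBlocks_multiply]
  simp [← Matrix.fromBlocks_zero]

/-- the canonical injection of `ℝ^p` into `VN p u v` (`y`-coordinates). -/
def Jmap (p u v : ℕ) : (Fin p → ℝ) →ₗ[ℝ] VN p u v where
  toFun y := fun a => match a with
    | Sum.inl (Sum.inr l) => y l
    | _ => 0
  map_add' y y' := by
    funext a
    rcases a with (i | l) | i <;> simp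
  map_smul' t y := by
    funext a
    rcases a with (i | l) | i <;> simp

lemma Jmap_inj (p u v : ℕ) : Function.Injective (Jmap p u v) := by
  intro y y' h
  funext l
  exact congrFun h (Sum.inl (Sum.inr l))

lemma mulVecLin_fact {p u v : ℕ} (B : Matrix (Fin p) (Fin p) ℝ) :
    (Matrix.fromBlocks (Matrix.fromBlocks (0 : Matrix (Fin p) (Fin p) ℝ)
        (0 : Matrix (Fin p) (Fin p) ℝ) B 0) 0 0
        (0 : Matrix (Fin (u + v)) (Fin (u + v)) ℝ)).mulVecLin
      = (Jmap p u v) ∘ₗ (B.mulVecLin ∘ₗ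
          LinearMap.funLeft ℝ ℝ (fun i : Fin p => (Sum.inl (Sum.inl i)))) := by
  refine LinearMap.ext fun W => ?_
  funext a
  rcases a with (i | l) | i <;>
    simp [Matrix.mulVecLin_apply, Matrix.mulVec, dotProduct,
      Fintype.sum_sum_type, Jmap, LinearMap.funLeft]

lemma rank_blocks {p u v : ℕ} (B : Matrix (Fin p) (Fin p) ℝ) (hB : IsUnit B.det) :
    (Matrix.fromBlocks (Matrix.fromBlocks (0 : Matrix (Fin p) (Fin p) ℝ)
      (0 : Matrix (Fin p) (Fin p) ℝ) B 0) 0 0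
      (0 : Matrix (Fin (u + v)) (Fin (u + v)) ℝ)).rank = p := by
  have hP : Function.Surjective (LinearMap.funLeft ℝ ℝ
      (fun i : Fin p => (Sum.inl (Sum.inl i) : (Fin p ⊕ Fin p) ⊕ Fin (u + v)))) :=
    LinearMap.funLeft_surjective_of_injective ℝ ℝ _
      (fun a b h => by
        injection h with h'
        injection h')
  have hBsurj : Function.Surjective B.mulVecLin := by
    intro z
    refine ⟨B⁻¹.mulVec z, ?_⟩
    rw [Matrix.mulVecLin_apply, Matrix.mulVec_mulVec, Matrix.mul_nonsing_inv _ hB,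
      Matrix.one_mulVec]
  have hsurj : Function.Surjective (B.mulVecLin ∘ₗ LinearMap.funLeft ℝ ℝ
      (fun i : Fin p => (Sum.inl (Sum.inl i) : (Fin p ⊕ Fin p) ⊕ Fin (u + v)))) := by
    rw [LinearMap.coe_comp]
    exact hBsurj.comp hP
  unfold Matrix.rank
  rw [mulVecLin_fact, LinearMap.range_comp, LinearMap.range_eq_top.mpr hsurj,
    Submodule.map_top, LinearMap.finrank_range_of_inj (Jmap_inj p u v),
    Module.finrank_fin_fun]

lemma matsim_blocks {p m : ℕ} (B₁ B₂ : Matrix (Fin p) (Fin p) ℝ)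
    (h₁ : IsUnit B₁.det) (h₂ : IsUnit B₂.det) :
    MatSimilar (Matrix.fromBlocks (Matrix.fromBlocks (0 : Matrix (Fin p) (Fin p) ℝ)
        (0 : Matrix (Fin p) (Fin p) ℝ) B₁ 0) 0 0
        (0 : Matrix (Fin m) (Fin m) ℝ))
      (Matrix.fromBlocks (Matrix.fromBlocks (0 : Matrix (Fin p) (Fin p) ℝ)
        (0 : Matrix (Fin p) (Fin p) ℝ) B₂ 0) 0 0 0) := by
  have hMM' : (B₁ * B₂⁻¹) * (B₂ * B₁⁻¹) = 1 := by
    rw [Matrix.mul_assoc, ← Matrix.mul_assoc B₂⁻¹, Matrix.nonsing_inv_mul _ h₂,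
      Matrix.one_mul, Matrix.mul_nonsing_inv _ h₁]
  have hMB : (B₁ * B₂⁻¹) * B₂ = B₁ := by
    rw [Matrix.mul_assoc, Matrix.nonsing_inv_mul _ h₂, Matrix.mul_one]
  set P := Matrix.fromBlocks (Matrix.fromBlocks (1 : Matrix (Fin p) (Fin p) ℝ) 0 0
    (B₁ * B₂⁻¹)) 0 0 (1 : Matrix (Fin m) (Fin m) ℝ) with hP
  set Q := Matrix.fromBlocks (Matrix.fromBlocks (1 : Matrix (Fin p) (Fin p) ℝ) 0 0
    (B₂ * B₁⁻¹)) 0 0 (1 : Matrix (Fin m) (Fin m) ℝ) with hQ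
  have hPQ : P * Q = 1 := by
    rw [hP, hQ, Matrix.fromBlocks_multiply, Matrix.fromBlocks_multiply]
    simp [hMM', Matrix.fromBlocks_one]
  have hdet : IsUnit P.det :=
    IsUnit.of_mul_eq_one Q.det (by rw [← Matrix.det_mul, hPQ, Matrix.det_one])
  refine ⟨P, hdet, ?_⟩
  rw [Matrix.inv_eq_right_inv hPQ, hP, hQ]
  rw [Matrix.fromBlocks_multiply, Matrix.fromBlocks_multiply]
  simp [Matrix.fromBlocks_multiply, hMB]

/-! ### Kernel of the core block is trivial -/

lemma bmat_ker {p u v r : ℕ} {ψ : (Fin p → ℝ) → Fin p → Fin p → ℝ} (hψ : MemPsi ψ)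
    (x : Fin p → ℝ) (π : Submodule ℝ (VN p u v)) (e : Fin r → VN p u v) (ε : Fin r → ℝ)
    (horth : IsOrthoBasis (gN u v ψ x) π e ε) (σ : ℝ) (hσ : σ = 1 ∨ σ = -1)
    (hε : ∀ n, ε n = σ) {k : ℕ} (ι : Fin k → Fin (u + v))
    (hι : ∀ i : Fin (u + v), (∀ j, ι j ≠ i) → (if (i : ℕ) < u then (-1 : ℝ) else 1) = -σ)
    (hkr : k + 2 ≤ r) :
    ∀ Y, (Bmat ψ x e ε).mulVec Y = 0 → Y = 0 := by
  intro Y hY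
  by_contra hY0
  have hσ0 : σ ≠ 0 := by rcases hσ with h | h <;> rw [h] <;> norm_num
  have hσ2 : σ ^ 2 = 1 := by rcases hσ with h | h <;> rw [h] <;> norm_num
  have key : ∀ Z, ∑ n, jacobiForm ψ x (fun i => e n (Sum.inl (Sum.inl i))) Y Z = 0 := by
    intro Z
    have h0 : ∑ l, Z l * (Bmat ψ x e ε).mulVec Y l = 0 := by
      rw [hY]; simp
    rw [dot_Bmat] at h0
    rw [Finset.sum_congr rfl (fun n _ => by rw [hε n])] at h0
    rw [← Finset.mul_sum] at h0
    exact (mul_eq_zero.mp h0).resolve_left hσ0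
  have hdiag : ∀ n, jacobiForm ψ x (fun i => e n (Sum.inl (Sum.inl i))) Y Y = 0 := by
    have hnn : ∀ n ∈ Finset.univ,
        (0 : ℝ) ≤ jacobiForm ψ x (fun i => e n (Sum.inl (Sum.inl i))) Y Y := by
      intro n _
      by_cases hXn : (fun i => e n (Sum.inl (Sum.inl i))) = (0 : Fin p → ℝ)
      · simp [hXn, jacobiForm_zero_X]
      · exact (hψ.2 x _ hXn).1 Y
    exact fun n => (Finset.sum_eq_zero_iff_of_nonneg hnn).mp (key Y) n (Finset.mem_univ n)
  refine noline ψ x π e ε horth σ hσ2 hε ι hι hkr ⟨Y, fun n => ?_⟩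
  by_cases hXn : (fun i => e n (Sum.inl (Sum.inl i))) = (0 : Fin p → ℝ)
  · exact ⟨0, by rw [hXn, zero_smul]⟩
  · obtain ⟨c, hcY⟩ := ((hψ.2 x _ hXn).2 Y).mp (jacobi_null hψ hXn (hdiag n))
    have hc0 : c ≠ 0 := by
      rintro rfl
      rw [zero_smul] at hcY
      exact hY0 hcY
    exact ⟨c⁻¹, by rw [hcY, smul_smul, inv_mul_cancel₀ hc0, one_smul]⟩

end Stmt15Aux

/-- Let `ψ ∈ Ψ`. If `u > 0` and `u+2 ≤ r ≤ p+u`, then every timelike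
`r`-dimensional subspace `π` of `(N, g_N)` satisfies `rank J_N(π) = p`; moreover
`J_N(π)² = 0` and any two such operators are similar, so `(N, g_N)` is Jordan Osserman of
type `(r,0)`. Similarly, if `v > 0` and `v+2 ≤ s ≤ p+v`, every spacelike `s`-dimensional
subspace satisfies `rank J_N(π) = p`, and `(N, g_N)` is Jordan Osserman of type `(0,s)`. -/

theorem stmt15 (p u v : ℕ) (hp : 2 ≤ p)
    (ψ : (Fin p → ℝ) → Fin p → Fin p → ℝ) (hψ : MemPsi ψ) :
    (0 < u → ∀ r : ℕ, u + 2 ≤ r → r ≤ p + u →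
      (∀ (x y : Fin p → ℝ) (w : Fin (u + v) → ℝ) (π : Submodule ℝ (VN p u v))
        (e : Fin r → VN p u v) (ε : Fin r → ℝ),
        HasSignature (gN u v ψ x) π r 0 → IsOrthoBasis (gN u v ψ x) π e ε →
        (hoJN u v ψ x e ε).rank = p ∧
        hoJN u v ψ x e ε * hoJN u v ψ x e ε = 0) ∧
      (∀ (x₁ x₂ : Fin p → ℝ) (π₁ π₂ : Submodule ℝ (VN p u v))
        (e₁ e₂ : Fin r → VN p u v) (ε₁ ε₂ : Fin r → ℝ),
        HasSignature (gN u v ψ x₁) π₁ r 0 → IsOrthoBasis (gN u v ψ x₁) π₁ e₁ ε₁ →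
        HasSignature (gN u v ψ x₂) π₂ r 0 → IsOrthoBasis (gN u v ψ x₂) π₂ e₂ ε₂ →
        MatSimilar (hoJN u v ψ x₁ e₁ ε₁) (hoJN u v ψ x₂ e₂ ε₂))) ∧
    (0 < v → ∀ s : ℕ, v + 2 ≤ s → s ≤ p + v →
      (∀ (x y : Fin p → ℝ) (w : Fin (u + v) → ℝ) (π : Submodule ℝ (VN p u v))
        (e : Fin s → VN p u v) (ε : Fin s → ℝ),
        HasSignature (gN u v ψ x) π 0 s → IsOrthoBasis (gN u v ψ x) π e ε →
        (hoJN u v ψ x e ε).rank = p ∧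
        hoJN u v ψ x e ε * hoJN u v ψ x e ε = 0) ∧
      (∀ (x₁ x₂ : Fin p → ℝ) (π₁ π₂ : Submodule ℝ (VN p u v))
        (e₁ e₂ : Fin s → VN p u v) (ε₁ ε₂ : Fin s → ℝ),
        HasSignature (gN u v ψ x₁) π₁ 0 s → IsOrthoBasis (gN u v ψ x₁) π₁ e₁ ε₁ →
        HasSignature (gN u v ψ x₂) π₂ 0 s → IsOrthoBasis (gN u v ψ x₂) π₂ e₂ ε₂ →
        MatSimilar (hoJN u v ψ x₁ e₁ ε₁) (hoJN u v ψ x₂ e₂ ε₂))) := by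
  constructor
  · -- timelike case
    intro hu r hru hrp
    have hι : ∀ i : Fin (u + v), (∀ j : Fin u, Fin.castAdd v j ≠ i) →
        (if (i : ℕ) < u then (-1 : ℝ) else 1) = -(-1 : ℝ) := by
      intro i hj
      rw [neg_neg, if_neg]
      intro hlt
      exact hj ⟨(i : ℕ), hlt⟩ (Fin.ext (by simp))
    constructor
    · intro x y w π e ε hsig horth
      have hε := sign_of_timelike ψ x π e ε hsig horth
      have hker := bmat_ker hψ x π e ε horth (-1) (Or.inr rfl) hε (Fin.castAdd v) hι
        (by omega)
      refine ⟨?_, ?_⟩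
      · rw [hoJN_eq]
        exact rank_blocks _ (isUnit_of_ker _ hker)
      · rw [hoJN_eq]
        exact sq_zero_blocks _ _
    · intro x₁ x₂ π₁ π₂ e₁ e₂ ε₁ ε₂ hs1 ho1 hs2 ho2
      have hk1 := bmat_ker hψ x₁ π₁ e₁ ε₁ ho1 (-1) (Or.inr rfl)
        (sign_of_timelike ψ x₁ π₁ e₁ ε₁ hs1 ho1) (Fin.castAdd v) hι (by omega)
      have hk2 := bmat_ker hψ x₂ π₂ e₂ ε₂ ho2 (-1) (Or.inr rfl)
        (sign_of_timelike ψ x₂ π₂ e₂ ε₂ hs2 ho2) (Fin.castAdd v) hι (by omega)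
      rw [hoJN_eq ψ x₁ e₁ ε₁, hoJN_eq ψ x₂ e₂ ε₂]
      exact matsim_blocks _ _ (isUnit_of_ker _ hk1) (isUnit_of_ker _ hk2)
  · -- spacelike case
    intro hv s hsv hsp
    have hι : ∀ i : Fin (u + v), (∀ j : Fin v, Fin.natAdd u j ≠ i) →
        (if (i : ℕ) < u then (-1 : ℝ) else 1) = -(1 : ℝ) := by
      intro i hj
      have hlt : (i : ℕ) < u := by
        by_contra h
        push_neg at h
        refine hj ⟨(i : ℕ) - u, by have := i.isLt; omega⟩ (Fin.ext ?_)
        simp only [Fin.coe_natAdd]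
        omega
      rw [if_pos hlt]
    constructor
    · intro x y w π e ε hsig horth
      have hε := sign_of_spacelike ψ x π e ε hsig horth
      have hker := bmat_ker hψ x π e ε horth 1 (Or.inl rfl) hε (Fin.natAdd u) hι
        (by omega)
      refine ⟨?_, ?_⟩
      · rw [hoJN_eq]
        exact rank_blocks _ (isUnit_of_ker _ hker)
      · rw [hoJN_eq]
        exact sq_zero_blocks _ _
    · intro x₁ x₂ π₁ π₂ e₁ e₂ ε₁ ε₂ hs1 ho1 hs2 ho2
      have hk1 := bmat_ker hψ x₁ π₁ e₁ ε₁ ho1 1 (Or.inl rfl)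
        (sign_of_spacelike ψ x₁ π₁ e₁ ε₁ hs1 ho1) (Fin.natAdd u) hι (by omega)
      have hk2 := bmat_ker hψ x₂ π₂ e₂ ε₂ ho2 1 (Or.inl rfl)
        (sign_of_spacelike ψ x₂ π₂ e₂ ε₂ hs2 ho2) (Fin.natAdd u) hι (by omega)
      rw [hoJN_eq ψ x₁ e₁ ε₁, hoJN_eq ψ x₂ e₂ ε₂]
      exact matsim_blocks _ _ (isUnit_of_ker _ hk1) (isUnit_of_ker _ hk2)
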